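/- Let R = k[[x^d, x^{d−1}y, …, xy^{d−1}, y^d]] ⊆ S = k[[x,y]] be the d-th Veronese subring, and for 1 ≤ n ≤ d−1 let M_n = Σ_{i=0}^{n} x^{n−i}y^i R ⊆ S. Then the R-module Hom_R(M_n, R) is generated by the maps f_i for 0 ≤ i ≤ d−n, where f_i(p) = x^{d−n−i}y^i p, and consequently the trace ideal of M_n equals the maximal ideal m = (x^d, x^{d−1}y, …, y^d) of R. -/

import Mathlib

set_option synthInstance.maxHeartbeats 1000000
set_option maxHeartbeats 2000000

def traceIdeal (R : Type*) [CommRing R] (M : Type*) [AddCommGroup M] [Module R M] :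
    Ideal R :=
  ⨆ f : M →ₗ[R] R, LinearMap.range f

noncomputable def Veronese (k : Type*) [Field k] (d : ℕ) :
    Subalgebra k (MvPowerSeries (Fin 2) k) :=
  Algebra.adjoin k {s : MvPowerSeries (Fin 2) k |
    ∃ i ≤ d, s = MvPowerSeries.X 0 ^ (d - i) * MvPowerSeries.X 1 ^ i}

noncomputable def VeroneseModule (k : Type*) [Field k] (d n : ℕ) :
    Submodule (Veronese k d) (MvPowerSeries (Fin 2) k) :=
  Submodule.span (Veronese k d) {s : MvPowerSeries (Fin 2) k |
    ∃ i ≤ n, s = MvPowerSeries.X 0 ^ (n - i) * MvPowerSeries.X 1 ^ i}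

namespace VerAux

open MvPowerSeries

/-- exponent vector (a, b) -/
noncomputable def E (a b : ℕ) : Fin 2 →₀ ℕ := Finsupp.single 0 a + Finsupp.single 1 b

lemma E_apply0 (a b : ℕ) : E a b 0 = a := by simp [E]
lemma E_apply1 (a b : ℕ) : E a b 1 = b := by simp [E, Finsupp.single_apply]

lemma eq_E (e : Fin 2 →₀ ℕ) : e = E (e 0) (e 1) := by
  ext i; fin_cases i
  · simp [E_apply0]
  · simpa using (E_apply1 (e 0) (e 1)).symm

lemma E_add (a b a' b' : ℕ) : E a b + E a' b' = E (a + a') (b + b') := by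
  simp only [E, Finsupp.single_add]; abel

lemma E_le_iff (a b : ℕ) (e : Fin 2 →₀ ℕ) : E a b ≤ e ↔ a ≤ e 0 ∧ b ≤ e 1 := by
  rw [Finsupp.le_def]
  constructor
  · intro h; exact ⟨by simpa [E_apply0] using h 0, by simpa [E_apply1] using h 1⟩
  · intro ⟨h0, h1⟩ i
    fin_cases i
    · simpa [E_apply0] using h0
    · simpa [E_apply1] using h1

lemma E_sub (a b : ℕ) (e : Fin 2 →₀ ℕ) : e - E a b = E (e 0 - a) (e 1 - b) := by
  ext i; fin_cases i
  · simp [Finsupp.tsub_apply, E_apply0]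
  · simp [Finsupp.tsub_apply, E_apply1]

variable {k : Type*} [Field k]

local notation "S" => MvPowerSeries (Fin 2) k

lemma XY_eq (a b : ℕ) : (X 0 : S) ^ a * (X 1) ^ b = monomial (R := k) (E a b) 1 := by
  rw [X_pow_eq, X_pow_eq, monomial_mul_monomial, one_mul]; rfl

/-- coefficient of `X^a Y^b * s` -/
lemma coeff_XY_mul (a b : ℕ) (s : S) (e : Fin 2 →₀ ℕ) :
    coeff (R := k) e ((X 0 : S) ^ a * (X 1) ^ b * s)
      = if a ≤ e 0 ∧ b ≤ e 1 then coeff (R := k) (E (e 0 - a) (e 1 - b)) s else 0 := by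
  classical
  rw [XY_eq, coeff_monomial_mul, E_sub, if_congr (E_le_iff a b e) rfl rfl]
  split <;> simp

end VerAux

namespace VerAux

open MvPowerSeries Pointwise

variable {k : Type*} [Field k]

local notation "S" => MvPowerSeries (Fin 2) k

def deg (e : Fin 2 →₀ ℕ) : ℕ := e 0 + e 1

lemma deg_E (a b : ℕ) : deg (E a b) = a + b := by simp [deg, E_apply0, E_apply1]

lemma gen_mem (d i : ℕ) (hi : i ≤ d) : ((X 0 : S) ^ (d - i) * (X 1) ^ i) ∈ Veronese k d :=
  Algebra.subset_adjoin ⟨i, hi, rfl⟩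

lemma XYpow_mem (d : ℕ) (hd : 1 ≤ d) :
    ∀ m a b, a + b = m → d ∣ m → ((X 0 : S) ^ a * (X 1) ^ b) ∈ Veronese k d := by
  intro m
  induction m using Nat.strong_induction_on with
  | _ m ih =>
    intro a b hab hdm
    rcases Nat.eq_zero_or_pos m with h0 | hpos
    · have ha : a = 0 := by omega
      have hb : b = 0 := by omega
      rw [ha, hb, pow_zero, pow_zero, one_mul]
      exact one_mem _
    · have hdm' : d ≤ m := Nat.le_of_dvd hpos hdm
      set i := min b d with hi
      have key : (X 0 : S) ^ a * (X 1) ^ b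
          = ((X 0) ^ (d - i) * (X 1) ^ i) * ((X 0) ^ (a - (d - i)) * (X 1) ^ (b - i)) := by
        rw [mul_mul_mul_comm, ← pow_add, ← pow_add]
        congr 2 <;> omega
      rw [key]
      exact mul_mem (gen_mem d i (min_le_right _ _))
        (ih (m - d) (by omega) _ _ (by omega) (Nat.dvd_sub hdm dvd_rfl))

lemma mem_veronese_of (d : ℕ) (hd : 1 ≤ d) (s : S) (A : Finset (Fin 2 →₀ ℕ))
    (hA : ∀ e, coeff (R := k) e s ≠ 0 → e ∈ A)
    (hdvd : ∀ e, coeff (R := k) e s ≠ 0 → d ∣ deg e) : s ∈ Veronese k d := by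
  classical
  have hs : s = ∑ e ∈ A, monomial (R := k) e (coeff (R := k) e s) := by
    ext e'
    rw [map_sum, Finset.sum_eq_single e']
    · rw [coeff_monomial_same]
    · intro e _ hne
      rw [coeff_monomial, if_neg (fun h => hne h.symm)]
    · intro h
      rw [coeff_monomial_same]
      by_contra hc
      exact h (hA e' hc)
  rw [hs]
  refine Subalgebra.sum_mem _ fun e he => ?_
  by_cases hc : coeff (R := k) e s = 0
  · rw [hc, map_zero]; exact zero_mem _
  · have h1 : (monomial (R := k) e (coeff (R := k) e s) : S) = coeff (R := k) e s • ((X 0 : S) ^ (e 0) * (X 1) ^ (e 1)) := by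
      rw [XY_eq, ← eq_E, ← map_smul, smul_eq_mul, mul_one]
    rw [h1]
    exact Subalgebra.smul_mem _ (XYpow_mem d hd _ (e 0) (e 1) rfl (hdvd e hc)) _

lemma mem_veronese_elim (d : ℕ) {s : S} (hs : s ∈ Veronese k d) :
    (∀ e, coeff (R := k) e s ≠ 0 → d ∣ deg e) ∧
      ∃ A : Finset (Fin 2 →₀ ℕ), ∀ e, coeff (R := k) e s ≠ 0 → e ∈ A := by
  classical
  induction hs using Algebra.adjoin_induction with
  | mem x hx =>
    obtain ⟨i, hi, rfl⟩ := hx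
    constructor
    · intro e he
      rw [XY_eq, coeff_monomial] at he
      have : e = E (d - i) i := by by_contra h; rw [if_neg h] at he; exact he rfl
      rw [this, deg_E]
      simpa using ⟨1, by omega⟩
    · refine ⟨{E (d - i) i}, fun e he => ?_⟩
      rw [XY_eq, coeff_monomial] at he
      have : e = E (d - i) i := by by_contra h; rw [if_neg h] at he; exact he rfl
      simp [this]
  | algebraMap r =>
    have hz : ∀ e, coeff (R := k) e ((algebraMap k (MvPowerSeries (Fin 2) k)) r) ≠ 0 → e = 0 := by
      intro e he
      rw [MvPowerSeries.algebraMap_apply, coeff_C] at he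
      by_contra h
      rw [if_neg h] at he
      exact he rfl
    constructor
    · intro e he
      rw [hz e he]
      simp [deg]
    · exact ⟨{0}, fun e he => by simp [hz e he]⟩
  | add x y hx hy ihx ihy =>
    obtain ⟨hx1, Ax, hAx⟩ := ihx
    obtain ⟨hy1, Ay, hAy⟩ := ihy
    constructor
    · intro e he
      rw [map_add] at he
      by_cases h : coeff (R := k) e x ≠ 0
      · exact hx1 e h
      · push_neg at h
        exact hy1 e (by rw [h, zero_add] at he; exact he)
    · refine ⟨Ax ∪ Ay, fun e he => ?_⟩
      rw [map_add] at he
      by_cases h : coeff (R := k) e x ≠ 0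
      · exact Finset.mem_union_left _ (hAx e h)
      · push_neg at h
        exact Finset.mem_union_right _ (hAy e (by rw [h, zero_add] at he; exact he))
  | mul x y hx hy ihx ihy =>
    obtain ⟨hx1, Ax, hAx⟩ := ihx
    obtain ⟨hy1, Ay, hAy⟩ := ihy
    have key : ∀ e, coeff (R := k) e (x * y) ≠ 0 →
        ∃ p : (Fin 2 →₀ ℕ) × (Fin 2 →₀ ℕ), p.1 + p.2 = e ∧ coeff (R := k) p.1 x ≠ 0 ∧ coeff (R := k) p.2 y ≠ 0 := by
      intro e he
      rw [coeff_mul] at he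
      obtain ⟨p, hp, hpne⟩ := Finset.exists_ne_zero_of_sum_ne_zero he
      exact ⟨p, Finset.HasAntidiagonal.mem_antidiagonal.mp hp, left_ne_zero_of_mul hpne, right_ne_zero_of_mul hpne⟩
    constructor
    · intro e he
      obtain ⟨p, hpe, h1, h2⟩ := key e he
      have : deg e = deg p.1 + deg p.2 := by
        rw [← hpe]; simp [deg, Finsupp.add_apply]; ring
      rw [this]
      exact dvd_add (hx1 _ h1) (hy1 _ h2)
    · refine ⟨Ax + Ay, fun e he => ?_⟩
      obtain ⟨p, hpe, h1, h2⟩ := key e he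
      rw [← hpe]
      exact Finset.add_mem_add (hAx _ h1) (hAy _ h2)

end VerAux

namespace VerAux

open MvPowerSeries

variable {k : Type*} [Field k]

local notation "S" => MvPowerSeries (Fin 2) k

lemma XYmul (a b a' b' : ℕ) :
    ((X 0 : S) ^ a * (X 1) ^ b) * ((X 0) ^ a' * (X 1) ^ b')
      = (X 0) ^ (a + a') * (X 1) ^ (b + b') := by
  rw [mul_mul_mul_comm, ← pow_add, ← pow_add]

variable (d n : ℕ)

lemma mul_mem_module (c : S)
    (h : ∀ j ≤ n, c * ((X 0 : S) ^ (n - j) * (X 1) ^ j) ∈ Veronese k d) :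
    ∀ p ∈ VeroneseModule k d n, c * p ∈ Veronese k d := by
  intro p hp
  induction hp using Submodule.span_induction with
  | mem x hx => obtain ⟨j, hj, rfl⟩ := hx; exact h j hj
  | zero => rw [mul_zero]; exact zero_mem _
  | add x y _ _ hx hy => rw [mul_add]; exact add_mem hx hy
  | smul r x _ hx =>
    have hrx : c * (r • x) = ↑r * (c * x) := by
      show c * (↑r * x) = ↑r * (c * x); ring
    rw [hrx]
    exact mul_mem r.2 hx

noncomputable def gmod (j : ℕ) (hj : j ≤ n) : VeroneseModule k d n :=
  ⟨(X 0 : S) ^ (n - j) * (X 1) ^ j, Submodule.subset_span ⟨j, hj, rfl⟩⟩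

lemma Fmap_mem (hn : n ≤ d) (i : ℕ) (hi : i ≤ d - n) (p : S) (hp : p ∈ VeroneseModule k d n) :
    (X 0 : S) ^ (d - n - i) * (X 1) ^ i * p ∈ Veronese k d := by
  refine mul_mem_module d n _ (fun j hj => ?_) p hp
  rw [XYmul]
  have h1 : d - n - i + (n - j) = d - (i + j) := by omega
  have h2 : i + j = i + j := rfl
  rw [h1]
  exact gen_mem d (i + j) (by omega)

noncomputable def Fmap (hn : n ≤ d) (i : ℕ) (hi : i ≤ d - n) :
    VeroneseModule k d n →ₗ[Veronese k d] Veronese k d where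
  toFun p := ⟨(X 0 : S) ^ (d - n - i) * (X 1) ^ i * ↑p, Fmap_mem d n hn i hi (p : S) p.2⟩
  map_add' p q := Subtype.ext (by push_cast; ring)
  map_smul' r p := Subtype.ext (by
    show (X 0 : S) ^ (d - n - i) * (X 1) ^ i * ((r : S) * (p : S)) = (r : S) * (_ * _ * (p : S))
    ring)

lemma Fmap_spec (hn : n ≤ d) (i : ℕ) (hi : i ≤ d - n) (p : VeroneseModule k d n) :
    ((Fmap (k := k) d n hn i hi p : Veronese k d) : S) = (X 0 : S) ^ (d - n - i) * (X 1) ^ i * (p : S) := by rfl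

variable {d n} (f : VeroneseModule k d n →ₗ[Veronese k d] Veronese k d)

noncomputable def uval (j : ℕ) : S :=
  if h : j ≤ n then ((f (gmod d n j h) : Veronese k d) : S) else 0

lemma uval_mem (j : ℕ) : uval f j ∈ Veronese k d := by
  unfold uval
  split
  · exact Subtype.mem _
  · exact zero_mem _

lemma uval_rel (hd : 1 ≤ d) (hn : n ≤ d) (j : ℕ) (hj : j < n) :
    (X 0 : S) ^ d * (X 1) ^ 0 * uval f (j + 1) = (X 0) ^ (d - 1) * (X 1) ^ 1 * uval f j := by
  have hj1 : j + 1 ≤ n := hj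
  have hj0 : j ≤ n := le_of_lt hj
  set r1 : Veronese k d := ⟨(X 0 : S) ^ d * (X 1) ^ 0, by simpa using gen_mem (k := k) d 0 (Nat.zero_le _)⟩
  set r2 : Veronese k d := ⟨(X 0 : S) ^ (d - 1) * (X 1) ^ 1, gen_mem d 1 hd⟩
  have hgen : r1 • gmod (k := k) d n (j + 1) hj1 = r2 • gmod (k := k) d n j hj0 := by
    refine Subtype.ext ?_
    show ((X 0 : S) ^ d * (X 1) ^ 0) * ((X 0) ^ (n - (j+1)) * (X 1) ^ (j+1))
        = ((X 0) ^ (d - 1) * (X 1) ^ 1) * ((X 0) ^ (n - j) * (X 1) ^ j)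
    rw [XYmul, XYmul]
    congr 2 <;> omega
  have h3 := congrArg (fun z => ((f z : Veronese k d) : S)) hgen
  simp only [map_smul, smul_eq_mul, MulMemClass.coe_mul] at h3
  unfold uval
  rw [dif_pos hj1, dif_pos hj0]
  exact h3

end VerAux

namespace VerAux

open MvPowerSeries

variable {k : Type*} [Field k]

local notation "S" => MvPowerSeries (Fin 2) k

variable {d n : ℕ} (f : VeroneseModule k d n →ₗ[Veronese k d] Veronese k d)

lemma u_coeff_rec (hd : 1 ≤ d) (hn : n ≤ d) (j : ℕ) (hj : j < n) (a b : ℕ) :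
    coeff (R := k) (E a b) (uval f (j + 1))
      = if 1 ≤ b then coeff (R := k) (E (a + 1) (b - 1)) (uval f j) else 0 := by
  have h := congrArg (coeff (R := k) (E (a + d) b)) (uval_rel f hd hn j hj)
  rw [coeff_XY_mul, coeff_XY_mul] at h
  simp only [E_apply0, E_apply1] at h
  rw [if_pos (by omega : d ≤ a + d ∧ 0 ≤ b)] at h
  rw [show a + d - d = a from by omega, show b - 0 = b from rfl,
    show a + d - (d - 1) = a + 1 from by omega] at h
  by_cases hb : 1 ≤ b
  · rw [if_pos (by omega : d - 1 ≤ a + d ∧ 1 ≤ b)] at h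
    rw [if_pos hb]
    exact h
  · rw [if_neg (by omega : ¬(d - 1 ≤ a + d ∧ 1 ≤ b))] at h
    rw [if_neg hb]
    exact h

lemma uval_coeff_zero (hd : 1 ≤ d) (hn : n ≤ d) (j : ℕ) (hj : j < n) (c : ℕ) :
    coeff (R := k) (E 0 c) (uval f j) = 0 := by
  have h := congrArg (coeff (R := k) (E (d - 1) (c + 1))) (uval_rel f hd hn j hj)
  rw [coeff_XY_mul, coeff_XY_mul] at h
  simp only [E_apply0, E_apply1] at h
  rw [if_neg (by omega : ¬(d ≤ d - 1 ∧ 0 ≤ c + 1)),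
    if_pos (by omega : d - 1 ≤ d - 1 ∧ 1 ≤ c + 1)] at h
  rw [show d - 1 - (d - 1) = 0 from by omega, show c + 1 - 1 = c from rfl] at h
  exact h.symm

lemma uval_coeff (hd : 1 ≤ d) (hn : n ≤ d) (j : ℕ) (hj : j ≤ n) (a b : ℕ) :
    coeff (R := k) (E a b) (uval f j)
      = if j ≤ b then coeff (R := k) (E (a + j) (b - j)) (uval f 0) else 0 := by
  induction j generalizing a b with
  | zero => simp
  | succ j ih =>
    have hj' : j < n := hj
    rw [u_coeff_rec f hd hn j hj' a b]
    by_cases hb : 1 ≤ b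
    · rw [if_pos hb, ih (le_of_lt hj')]
      by_cases hjb : j + 1 ≤ b
      · rw [if_pos (by omega : j ≤ b - 1), if_pos hjb,
          show a + 1 + j = a + (j + 1) from by omega,
          show b - 1 - j = b - (j + 1) from by omega]
      · rw [if_neg (by omega : ¬ j ≤ b - 1), if_neg hjb]
    · rw [if_neg hb, if_neg (by omega : ¬ j + 1 ≤ b)]

lemma uval0_coeff_zero (hd : 1 ≤ d) (hn : n ≤ d) (a : ℕ) (ha : a < n) (b : ℕ) :
    coeff (R := k) (E a b) (uval f 0) = 0 := by
  have h2 := uval_coeff f hd hn a (by omega) 0 (b + a)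
  rw [uval_coeff_zero f hd hn a ha (b + a), if_pos (by omega : a ≤ b + a),
    show 0 + a = a from by omega, show b + a - a = b from by omega] at h2
  exact h2.symm

/-- the series `w` with `u_0 = x^n w` -/
noncomputable def wser : S := fun e => coeff (R := k) (E (e 0 + n) (e 1)) (uval f 0)

lemma coeff_wser (e : Fin 2 →₀ ℕ) :
    coeff (R := k) e (wser f) = coeff (R := k) (E (e 0 + n) (e 1)) (uval f 0) := rfl

lemma uval_eq_mul_wser (hd : 1 ≤ d) (hn : n ≤ d) (j : ℕ) (hj : j ≤ n) :
    uval f j = (X 0 : S) ^ (n - j) * (X 1) ^ j * wser f := by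
  ext e
  rw [coeff_XY_mul, eq_E e, uval_coeff f hd hn j hj, E_apply0, E_apply1]
  by_cases h1 : n - j ≤ e 0 ∧ j ≤ e 1
  · rw [if_pos h1, if_pos h1.2, coeff_wser, E_apply0, E_apply1,
      show e 0 - (n - j) + n = e 0 + j from by omega]
  · rw [if_neg h1]
    by_cases h2 : j ≤ e 1
    · rw [if_pos h2]
      exact uval0_coeff_zero f hd hn (e 0 + j) (by omega) (e 1 - j)
    · rw [if_neg h2]

lemma wser_dvd (hd : 1 ≤ d) (hn : n ≤ d) (e : Fin 2 →₀ ℕ) (he : coeff (R := k) e (wser f) ≠ 0) :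
    d ∣ e 0 + e 1 + n := by
  rw [coeff_wser] at he
  have := ((mem_veronese_elim d (uval_mem f 0)).1 _ he)
  rw [deg_E] at this
  have h2 : e 0 + n + e 1 = e 0 + e 1 + n := by omega
  rwa [h2] at this

end VerAux

namespace VerAux

open MvPowerSeries

variable {k : Type*} [Field k]

local notation "S" => MvPowerSeries (Fin 2) k

variable {d n : ℕ} (f : VeroneseModule k d n →ₗ[Veronese k d] Veronese k d)

noncomputable def rser (i : ℕ) : S := fun e =>
  if i = d - n then coeff (R := k) (E (e 0) (e 1 + (d - n))) (wser f)
  else if e 1 = 0 then coeff (R := k) (E (e 0 + (d - n - i)) i) (wser f) else 0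

lemma coeff_rser (i : ℕ) (e : Fin 2 →₀ ℕ) :
    coeff (R := k) e (rser f i)
      = if i = d - n then coeff (R := k) (E (e 0) (e 1 + (d - n))) (wser f)
        else if e 1 = 0 then coeff (R := k) (E (e 0 + (d - n - i)) i) (wser f) else 0 := rfl

lemma wser_decomp (hd : 1 ≤ d) (hn1 : 1 ≤ n) (hn : n ≤ d) :
    wser f = ∑ i ∈ Finset.range (d - n + 1),
      (X 0 : S) ^ (d - n - i) * (X 1) ^ i * rser f i := by
  classical
  ext e
  rw [map_sum]
  by_cases hB : d - n ≤ e 1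
  · rw [Finset.sum_eq_single (d - n)]
    · rw [coeff_XY_mul, if_pos (by omega : d - n - (d - n) ≤ e 0 ∧ d - n ≤ e 1),
        coeff_rser, if_pos rfl, E_apply0, E_apply1,
        show e 0 - (d - n - (d - n)) = e 0 from by omega,
        show e 1 - (d - n) + (d - n) = e 1 from by omega]
      exact (congrArg (fun e' => coeff (R := k) e' (wser f)) (eq_E e))
    · intro i hi hine
      have hilt : i < d - n := by
        simp only [Finset.mem_range] at hi; omega
      rw [coeff_XY_mul]
      by_cases hcond : d - n - i ≤ e 0 ∧ i ≤ e 1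
      · rw [if_pos hcond, coeff_rser, if_neg (by omega), E_apply1,
          if_neg (by omega : ¬ e 1 - i = 0)]
      · rw [if_neg hcond]
    · intro h
      exact absurd (Finset.mem_range.mpr (by omega)) h
  · rw [Finset.sum_eq_single (e 1)]
    · rw [coeff_XY_mul]
      by_cases hcond : d - n - e 1 ≤ e 0
      · rw [if_pos ⟨hcond, le_refl _⟩, coeff_rser, if_neg (by omega), E_apply0, E_apply1,
          if_pos (by omega : e 1 - e 1 = 0),
          show e 0 - (d - n - e 1) + (d - n - e 1) = e 0 from by omega]
        exact (congrArg (fun e' => coeff (R := k) e' (wser f)) (eq_E e))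
      · rw [if_neg (by omega : ¬(d - n - e 1 ≤ e 0 ∧ e 1 ≤ e 1))]
        by_contra hne
        have hdvd := wser_dvd f hd hn e hne
        have hge : d ≤ e 0 + e 1 + n := Nat.le_of_dvd (by omega) hdvd
        omega
    · intro i hi hine
      rw [coeff_XY_mul]
      by_cases hcond : d - n - i ≤ e 0 ∧ i ≤ e 1
      · rw [if_pos hcond, coeff_rser, if_neg (by omega), E_apply1,
          if_neg (by omega : ¬ e 1 - i = 0)]
      · rw [if_neg hcond]
    · intro h
      exact absurd (Finset.mem_range.mpr (by omega)) h

lemma rser_mem (hd : 1 ≤ d) (hn : n ≤ d) (i : ℕ) (hi : i ≤ d - n) :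
    rser f i ∈ Veronese k d := by
  classical
  obtain ⟨A0, hA0⟩ := (mem_veronese_elim d (uval_mem f 0)).2
  refine mem_veronese_of d hd _
    (A0.image (fun e' => if i = d - n then E (e' 0 - n) (e' 1 - (d - n))
      else E (e' 0 - n - (d - n - i)) 0)) (fun e he => ?_) (fun e he => ?_)
  · rw [coeff_rser] at he
    by_cases hieq : i = d - n
    · rw [if_pos hieq] at he
      rw [coeff_wser, E_apply0, E_apply1] at he
      refine Finset.mem_image.mpr ⟨E (e 0 + n) (e 1 + (d - n)), hA0 _ he, ?_⟩
      rw [if_pos hieq, E_apply0, E_apply1,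
        show e 0 + n - n = e 0 from by omega,
        show e 1 + (d - n) - (d - n) = e 1 from by omega]
      exact (eq_E e).symm
    · rw [if_neg hieq] at he
      by_cases h10 : e 1 = 0
      · rw [if_pos h10] at he
        rw [coeff_wser, E_apply0, E_apply1] at he
        refine Finset.mem_image.mpr ⟨E (e 0 + (d - n - i) + n) i, hA0 _ he, ?_⟩
        rw [if_neg hieq, E_apply0,
          show e 0 + (d - n - i) + n - n - (d - n - i) = e 0 from by omega]
        conv_rhs => rw [eq_E e]
        rw [h10]
      · rw [if_neg h10] at he
        exact absurd rfl he
  · rw [coeff_rser] at he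
    by_cases hieq : i = d - n
    · rw [if_pos hieq] at he
      have hdvd := wser_dvd f hd hn _ he
      rw [E_apply0, E_apply1] at hdvd
      have heq : e 0 + (e 1 + (d - n)) + n = deg e + d := by
        unfold deg; omega
      rw [heq, Nat.add_comm (deg e) d] at hdvd
      exact (Nat.dvd_add_right (dvd_refl d)).mp hdvd
    · rw [if_neg hieq] at he
      by_cases h10 : e 1 = 0
      · rw [if_pos h10] at he
        have hdvd := wser_dvd f hd hn _ he
        rw [E_apply0, E_apply1] at hdvd
        have heq : e 0 + (d - n - i) + i + n = deg e + d := by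
          unfold deg; omega
        rw [heq, Nat.add_comm (deg e) d] at hdvd
        exact (Nat.dvd_add_right (dvd_refl d)).mp hdvd
      · rw [if_neg h10] at he
        exact absurd rfl he

end VerAux


namespace VerAux

open MvPowerSeries

variable {k : Type*} [Field k]

local notation "S" => MvPowerSeries (Fin 2) k

variable {d n : ℕ}

lemma uval_eq (f : VeroneseModule k d n →ₗ[Veronese k d] Veronese k d) (j : ℕ) (hj : j ≤ n) :
    uval f j = ((f (gmod d n j hj) : Veronese k d) : S) := dif_pos hj

lemma hom_eq_sum (hd : 1 ≤ d) (hn1 : 1 ≤ n) (hn : n ≤ d)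
    (f : VeroneseModule k d n →ₗ[Veronese k d] Veronese k d) :
    f = ∑ i : Fin (d - n + 1),
      (⟨rser f i.1, rser_mem f hd hn i.1 (Nat.lt_succ_iff.mp i.isLt)⟩ : Veronese k d)
        • Fmap (k := k) d n hn i.1 (Nat.lt_succ_iff.mp i.isLt) := by
  classical
  set g := ∑ i : Fin (d - n + 1),
      (⟨rser f i.1, rser_mem f hd hn i.1 (Nat.lt_succ_iff.mp i.isLt)⟩ : Veronese k d)
        • Fmap (k := k) d n hn i.1 (Nat.lt_succ_iff.mp i.isLt) with hg
  refine LinearMap.ext fun p => ?_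
  obtain ⟨x, hx⟩ := p
  induction hx using Submodule.span_induction with
  | mem x hxm =>
    obtain ⟨j, hj, rfl⟩ := hxm
    have hmk : (⟨(X 0 : S) ^ (n - j) * (X 1) ^ j, Submodule.subset_span ⟨j, hj, rfl⟩⟩ :
        VeroneseModule k d n) = gmod d n j hj := rfl
    apply Subtype.ext
    have hL : ((f (gmod d n j hj) : Veronese k d) : S) = uval f j := (uval_eq f j hj).symm
    rw [show (⟨(X 0 : S) ^ (n - j) * (X 1) ^ j, _⟩ : VeroneseModule k d n) = gmod d n j hj
      from rfl]
    rw [hL, hg, LinearMap.sum_apply, AddSubmonoidClass.coe_finset_sum]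
    have hterm : ∀ i : Fin (d - n + 1),
        ((((⟨rser f i.1, rser_mem f hd hn i.1 (Nat.lt_succ_iff.mp i.isLt)⟩ : Veronese k d)
          • Fmap (k := k) d n hn i.1 (Nat.lt_succ_iff.mp i.isLt)) (gmod d n j hj) : Veronese k d) : S)
          = rser f i.1 * ((X 0 : S) ^ (d - n - i.1) * (X 1) ^ i.1
              * ((X 0) ^ (n - j) * (X 1) ^ j)) := by
      intro i
      rw [LinearMap.smul_apply, smul_eq_mul, MulMemClass.coe_mul]
      rfl
    rw [Finset.sum_congr rfl (fun i _ => hterm i)]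
    rw [Fin.sum_univ_eq_sum_range (fun i => rser f i * ((X 0 : S) ^ (d - n - i) * (X 1) ^ i
        * ((X 0) ^ (n - j) * (X 1) ^ j))) (d - n + 1)]
    have hre : ∀ i, rser f i * ((X 0 : S) ^ (d - n - i) * (X 1) ^ i
        * ((X 0) ^ (n - j) * (X 1) ^ j))
        = ((X 0 : S) ^ (d - n - i) * (X 1) ^ i * rser f i) * ((X 0) ^ (n - j) * (X 1) ^ j) := by
      intro i; ring
    rw [Finset.sum_congr rfl (fun i _ => hre i), ← Finset.sum_mul,
      ← wser_decomp f hd hn1 hn, uval_eq_mul_wser f hd hn j hj]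
    ring
  | zero =>
    rw [show (⟨(0 : S), Submodule.zero_mem _⟩ : VeroneseModule k d n) = 0 from rfl,
      map_zero, map_zero]
  | add x y hx hy ihx ihy =>
    rw [show (⟨x + y, Submodule.add_mem _ hx hy⟩ : VeroneseModule k d n)
        = ⟨x, hx⟩ + ⟨y, hy⟩ from rfl, map_add, map_add, ihx, ihy]
  | smul r x hx ih =>
    rw [show (⟨r • x, Submodule.smul_mem _ r hx⟩ : VeroneseModule k d n)
        = r • ⟨x, hx⟩ from rfl, map_smul, map_smul, ih]

end VerAux

namespace VerAux

open MvPowerSeries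

variable {k : Type*} [Field k]

local notation "S" => MvPowerSeries (Fin 2) k

variable {d n : ℕ}

lemma mulgen_mem_span (hd : 1 ≤ d) (hn : n ≤ d) (i : ℕ) (hi : i ≤ d - n)
    (x : S) (hx : x ∈ VeroneseModule k d n) :
    ∀ q : Veronese k d, (q : S) = (X 0 : S) ^ (d - n - i) * (X 1) ^ i * x →
      q ∈ Ideal.span {r : Veronese k d | ∃ l ≤ d,
        (r : S) = (X 0 : S) ^ (d - l) * (X 1) ^ l} := by
  induction hx using Submodule.span_induction with
  | mem x hxm =>
    obtain ⟨j, hj, rfl⟩ := hxm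
    intro q hq
    apply Ideal.subset_span
    refine ⟨i + j, by omega, ?_⟩
    rw [hq, XYmul, show d - n - i + (n - j) = d - (i + j) from by omega]
  | zero =>
    intro q hq
    rw [mul_zero] at hq
    rw [show q = 0 from Subtype.ext hq]
    exact Ideal.zero_mem _
  | add x y hx hy ihx ihy =>
    intro q hq
    rw [mul_add] at hq
    have h1 : q = (⟨(X 0 : S) ^ (d - n - i) * (X 1) ^ i * x, Fmap_mem d n hn i hi x hx⟩ :
        Veronese k d) + ⟨(X 0 : S) ^ (d - n - i) * (X 1) ^ i * y, Fmap_mem d n hn i hi y hy⟩ :=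
      Subtype.ext (by rw [hq]; rfl)
    rw [h1]
    exact Ideal.add_mem _ (ihx _ rfl) (ihy _ rfl)
  | smul r x hx ih =>
    intro q hq
    have hq' : (q : S) = (r : S) * ((X 0 : S) ^ (d - n - i) * (X 1) ^ i * x) := by
      rw [hq]
      show (X 0 : S) ^ (d - n - i) * (X 1) ^ i * ((r : S) * x) = _
      ring
    have h1 : q = r * ⟨(X 0 : S) ^ (d - n - i) * (X 1) ^ i * x, Fmap_mem d n hn i hi x hx⟩ :=
      Subtype.ext (by rw [MulMemClass.coe_mul]; exact hq')
    rw [h1]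
    exact Ideal.mul_mem_left _ r (ih _ rfl)

end VerAux

/-- Let `R = k⟦x^d, …, y^d⟧ ⊆ S = k⟦x,y⟧` be the `d`-th Veronese subring
and, for `1 ≤ n ≤ d-1`, let `Mₙ = Σ_{i=0}^n x^(n-i)y^i R ⊆ S`.  Then `Hom_R(Mₙ, R)` is
generated by the `d - n + 1` maps `fᵢ : p ↦ x^(d-n-i) y^i p` (`0 ≤ i ≤ d - n`), and the
trace ideal of `Mₙ` equals the maximal ideal `m = (x^d, x^(d-1)y, …, y^d)` of `R`. -/
theorem veronese_hom_generators_and_traceIdeal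
    (k : Type*) [Field k] (d n : ℕ) (hn1 : 1 ≤ n) (hn2 : n ≤ d - 1) (hd : 2 ≤ d) :
    (∃ F : Fin (d - n + 1) → (VeroneseModule k d n →ₗ[Veronese k d] Veronese k d),
        (∀ (i : Fin (d - n + 1)) (p : VeroneseModule k d n),
          ((F i p : MvPowerSeries (Fin 2) k)
            = MvPowerSeries.X 0 ^ (d - n - (i : ℕ)) * MvPowerSeries.X 1 ^ (i : ℕ)
              * (p : MvPowerSeries (Fin 2) k))) ∧
        ∀ f : VeroneseModule k d n →ₗ[Veronese k d] Veronese k d,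
          f ∈ Submodule.span (Veronese k d) (Set.range F)) ∧
      traceIdeal (Veronese k d) (VeroneseModule k d n)
        = Ideal.span {r : Veronese k d | ∃ i ≤ d,
            (r : MvPowerSeries (Fin 2) k)
              = MvPowerSeries.X 0 ^ (d - i) * MvPowerSeries.X 1 ^ i} := by
  classical
  have hd1 : 1 ≤ d := by omega
  have hnd : n ≤ d := by omega
  set F : Fin (d - n + 1) → (VeroneseModule k d n →ₗ[Veronese k d] Veronese k d) :=
    fun i => VerAux.Fmap (k := k) d n hnd i.1 (Nat.lt_succ_iff.mp i.isLt) with hF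
  have hspec : ∀ (i : Fin (d - n + 1)) (p : VeroneseModule k d n),
      ((F i p : MvPowerSeries (Fin 2) k)
        = MvPowerSeries.X 0 ^ (d - n - (i : ℕ)) * MvPowerSeries.X 1 ^ (i : ℕ)
          * (p : MvPowerSeries (Fin 2) k)) :=
    fun i p => VerAux.Fmap_spec (k := k) d n hnd i.1 (Nat.lt_succ_iff.mp i.isLt) p
  have hspan : ∀ f : VeroneseModule k d n →ₗ[Veronese k d] Veronese k d,
      f ∈ Submodule.span (Veronese k d) (Set.range F) := by
    intro f
    rw [VerAux.hom_eq_sum hd1 hn1 hnd f]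
    exact Submodule.sum_mem _ fun i _ =>
      Submodule.smul_mem _ _ (Submodule.subset_span ⟨i, rfl⟩)
  refine ⟨⟨F, hspec, hspan⟩, ?_⟩
  unfold traceIdeal
  apply le_antisymm
  · refine iSup_le fun f => ?_
    have hf := hspan f
    induction hf using Submodule.span_induction with
    | mem f' hf' =>
      obtain ⟨i, rfl⟩ := hf'
      intro x hx
      obtain ⟨p, rfl⟩ := hx
      exact VerAux.mulgen_mem_span hd1 hnd i.1 (Nat.lt_succ_iff.mp i.isLt) ↑p p.2
        (F i p) (hspec i p)
    | zero =>
      intro x hx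
      obtain ⟨p, rfl⟩ := hx
      rw [LinearMap.zero_apply]
      exact Ideal.zero_mem _
    | add f1 f2 h1 h2 ih1 ih2 =>
      intro x hx
      obtain ⟨p, rfl⟩ := hx
      rw [LinearMap.add_apply]
      exact Ideal.add_mem _ (ih1 ⟨p, rfl⟩) (ih2 ⟨p, rfl⟩)
    | smul c f' hf' ih =>
      intro x hx
      obtain ⟨p, rfl⟩ := hx
      rw [LinearMap.smul_apply, smul_eq_mul]
      exact Ideal.mul_mem_left _ c (ih ⟨p, rfl⟩)
  · rw [Ideal.span_le]
    rintro r ⟨i, hid, hr⟩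
    have hj : min i n ≤ n := min_le_right _ _
    have hi' : i - min i n ≤ d - n := by omega
    have hval : ((VerAux.Fmap (k := k) d n hnd (i - min i n) hi'
          (VerAux.gmod d n (min i n) hj) : Veronese k d) : MvPowerSeries (Fin 2) k)
        = (MvPowerSeries.X 0 : MvPowerSeries (Fin 2) k) ^ (d - i) * (MvPowerSeries.X 1) ^ i := by
      rw [VerAux.Fmap_spec]
      show _ * ((MvPowerSeries.X 0 : MvPowerSeries (Fin 2) k) ^ (n - min i n)
          * (MvPowerSeries.X 1) ^ (min i n)) = _
      rw [VerAux.XYmul]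
      congr 2 <;> omega
    have hreq : r = VerAux.Fmap (k := k) d n hnd (i - min i n) hi'
        (VerAux.gmod d n (min i n) hj) := Subtype.ext (by rw [hval, hr])
    rw [hreq]
    exact le_iSup (fun f : VeroneseModule k d n →ₗ[Veronese k d] Veronese k d =>
      LinearMap.range f) (VerAux.Fmap (k := k) d n hnd (i - min i n) hi') ⟨_, rfl⟩
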